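/- arXiv:1801.02339 — 2 statements merged into one kernel-verified Lean document; each statement's English description precedes it below -/
import Mathlib

section
/- Let V be a finite-dimensional commutative real algebra with a positive definite associative symmetric bilinear form, and let c ≠ 0 be an idempotent such that the Peirce eigenspace V_c(1) = {x : cx = x} is a subalgebra of V. Then dim V_c(1) = 1 if and only if c is indecomposable (c cannot be written as a sum of two nonzero idempotents whose product is zero). -/
/-!
If `dim V_c(1) ≥ 2`, minimise the cubic form `x ↦ ⟪x², x⟫` on the unit sphere of
`V_c(1) ∩ c^⊥`; the minimum is `≤ 0` because the form is odd. Since `c` is a unit for the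
subalgebra `V_c(1)`, the first-order condition at a minimiser `x` forces
`x² = λ x + ‖c‖⁻² c`, so `x` and `c` span a copy of `ℝ × ℝ` and `αx + βc` is an idempotent
`e ∉ {0, c}` for suitable `α ≠ 0`; then `c = e + (c - e)` is a decomposition. Conversely, the
two summands of a decomposition are linearly independent elements of `V_c(1)`.
-/

open Module RealInnerProductSpace

section CommRing

variable {R M : Type*} [CommRing R] [AddCommGroup M] [Module R M] {mul : M →ₗ[R] M →ₗ[R] M}

theorem mul_sub_eq_zero_of_mul_eq (hcomm : ∀ x y, mul x y = mul y x) {c e : M}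
    (hce : mul c e = e) (he : mul e e = e) : mul e (c - e) = 0 := by
  rw [map_sub, hcomm e c, hce, he, sub_self]

theorem mul_self_sub_eq_of_mul_eq (hcomm : ∀ x y, mul x y = mul y x) {c e : M}
    (hc : mul c c = c) (hce : mul c e = e) (he : mul e e = e) :
    mul (c - e) (c - e) = c - e := by
  rw [map_sub, hcomm (c - e) e, mul_sub_eq_zero_of_mul_eq hcomm hce he, map_sub,
    LinearMap.sub_apply, hc, hcomm e c, hce, sub_zero]

end CommRing

section Field

variable {K M : Type*} [Field K] [AddCommGroup M] [Module K M] {mul : M →ₗ[K] M →ₗ[K] M}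

theorem mul_self_eq_of_quadratic [CharZero K] (hcomm : ∀ x y, mul x y = mul y x) {c x : M}
    (hc : mul c c = c) (hcx : mul c x = x) {l m α β : K} (hx : mul x x = l • x + m • c)
    (hα : α ^ 2 * (l ^ 2 + 4 * m) = 1) (hβ : 2 * β = 1 - α * l) :
    mul (α • x + β • c) (α • x + β • c) = α • x + β • c := by
  simp only [map_add, map_smul, LinearMap.add_apply, LinearMap.smul_apply, hx, hc, hcx,
    hcomm x c]
  linear_combination (norm := module)
    hβ • (α • x + ((2 * β - 1 - α * l) / 4) • c) + hα • ((1 / 4 : K) • c)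

theorem finrank_eigenspace_add_ne_one (hcomm : ∀ x y, mul x y = mul y x) {c₁ c₂ : M}
    (h₁ : mul c₁ c₁ = c₁) (h₂ : mul c₂ c₂ = c₂) (hc₁ : c₁ ≠ 0) (hc₂ : c₂ ≠ 0)
    (h₁₂ : mul c₁ c₂ = 0) : finrank K (End.eigenspace (mul (c₁ + c₂)) 1) ≠ 1 := by
  have mem₁ : c₁ ∈ End.eigenspace (mul (c₁ + c₂)) 1 := by
    rw [End.mem_eigenspace_iff, one_smul, map_add, LinearMap.add_apply, h₁, hcomm, h₁₂,
      add_zero]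
  have mem₂ : c₂ ∈ End.eigenspace (mul (c₁ + c₂)) 1 := by
    rw [End.mem_eigenspace_iff, one_smul, map_add, LinearMap.add_apply, h₂, h₁₂, zero_add]
  intro h
  obtain ⟨r, hr⟩ :=
    (finrank_eq_one_iff_of_nonzero' ⟨c₂, mem₂⟩ (by simpa using hc₂)).mp h ⟨c₁, mem₁⟩
  have hr : r • c₂ = c₁ := congrArg Subtype.val hr
  rw [← hr, map_smul, LinearMap.smul_apply, h₂, hr] at h₁₂
  exact hc₁ h₁₂

end Field

theorem eq_zero_of_forall_quartic_nonneg {a b c d : ℝ}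
    (h : ∀ s : ℝ, 0 ≤ a * s + b * s ^ 2 + c * s ^ 3 + d * s ^ 4) : a = 0 := by
  have hmin : IsLocalMin (fun s : ℝ => a * s + b * s ^ 2 + c * s ^ 3 + d * s ^ 4) 0 :=
    Filter.Eventually.of_forall fun s => by simpa using h s
  have hderiv : HasDerivAt (fun s : ℝ => a * s + b * s ^ 2 + c * s ^ 3 + d * s ^ 4) a 0 := by
    refine (((((hasDerivAt_id' 0).const_mul a).add ((hasDerivAt_pow 2 0).const_mul b)).add
      ((hasDerivAt_pow 3 0).const_mul c)).add ((hasDerivAt_pow 4 0).const_mul d)).congr_deriv ?_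
    norm_num
  exact hmin.hasDerivAt_eq_zero hderiv

section InnerProduct

variable {E : Type*} [NormedAddCommGroup E] [InnerProductSpace ℝ E]

def cubicForm (mul : E →ₗ[ℝ] E →ₗ[ℝ] E) (x : E) : ℝ := ⟪mul x x, x⟫

variable {mul : E →ₗ[ℝ] E →ₗ[ℝ] E}

theorem cubicForm_smul (r : ℝ) (x : E) : cubicForm mul (r • x) = r ^ 3 * cubicForm mul x := by
  simp only [cubicForm, map_smul, LinearMap.smul_apply, inner_smul_left, inner_smul_right,
    RCLike.conj_to_real]
  ring

theorem cubicForm_neg (x : E) : cubicForm mul (-x) = -cubicForm mul x := by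
  rw [← neg_one_smul ℝ x, cubicForm_smul]
  ring

theorem continuous_cubicForm [FiniteDimensional ℝ E] : Continuous (cubicForm mul) := by
  let M : E →L[ℝ] E →L[ℝ] E :=
    LinearMap.toContinuousLinearMap (LinearMap.toContinuousLinearMap.toLinearMap ∘ₗ mul)
  exact (M.continuous.clm_apply continuous_id).inner (𝕜 := ℝ) continuous_id

theorem cubicForm_add_smul (hcomm : ∀ x y, mul x y = mul y x)
    (hinv : ∀ x y z, ⟪mul x y, z⟫ = ⟪x, mul y z⟫) (x h : E) (s : ℝ) :
    cubicForm mul (x + s • h) = cubicForm mul x + 3 * s * ⟪mul x x, h⟫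
      + 3 * s ^ 2 * ⟪mul h h, x⟫ + s ^ 3 * cubicForm mul h := by
  have hxh : ⟪mul x h, x⟫ = ⟪mul x x, h⟫ := by rw [hcomm, hinv, real_inner_comm]
  have hhx : ⟪mul x h, h⟫ = ⟪mul h h, x⟫ := by rw [hinv, real_inner_comm]
  simp only [cubicForm, map_add, map_smul, LinearMap.add_apply, LinearMap.smul_apply,
    inner_add_left, inner_add_right, inner_smul_left, inner_smul_right, RCLike.conj_to_real,
    hcomm h x, hxh, hhx]
  ring

theorem exists_isMinOn_cubicForm [FiniteDimensional ℝ E] {W : Submodule ℝ E} (hW : W ≠ ⊥) :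
    ∃ x ∈ W, ‖x‖ = 1 ∧ IsMinOn (cubicForm mul) (W ∩ Metric.sphere 0 1) x ∧
      cubicForm mul x ≤ 0 := by
  obtain ⟨v, hvW, hv⟩ := W.ne_bot_iff.mp hW
  have hS : IsCompact ((W : Set E) ∩ Metric.sphere 0 1) :=
    (isCompact_sphere 0 1).inter_left W.closed_of_finiteDimensional
  have hv1 : ‖v‖⁻¹ • v ∈ (W : Set E) ∩ Metric.sphere 0 1 :=
    ⟨W.smul_mem _ hvW, by simp [norm_smul, hv]⟩
  obtain ⟨x, ⟨hxW, hx⟩, hmin⟩ := hS.exists_isMinOn ⟨_, hv1⟩ continuous_cubicForm.continuousOn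
  have hneg : cubicForm mul x ≤ cubicForm mul (-x) :=
    hmin ⟨W.neg_mem hxW, by simpa using hx⟩
  rw [cubicForm_neg] at hneg
  exact ⟨x, hxW, mem_sphere_zero_iff_norm.mp hx, hmin, by linarith⟩

theorem inner_mul_self_eq_zero_of_isMinOn (hcomm : ∀ x y, mul x y = mul y x)
    (hinv : ∀ x y z, ⟪mul x y, z⟫ = ⟪x, mul y z⟫) {W : Submodule ℝ E} {x h : E} (hxW : x ∈ W)
    (hx : ‖x‖ = 1) (hmin : IsMinOn (cubicForm mul) (W ∩ Metric.sphere 0 1) x)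
    (hneg : cubicForm mul x ≤ 0) (hhW : h ∈ W) (hxh : ⟪x, h⟫ = 0) : ⟪mul x x, h⟫ = 0 := by
  set u₀ := cubicForm mul x
  suffices ∀ s : ℝ, 0 ≤ 3 * ⟪mul x x, h⟫ * s + (3 * ⟪mul h h, x⟫ - 2 * u₀ * ‖h‖ ^ 2) * s ^ 2
      + cubicForm mul h * s ^ 3 + (-u₀ * ‖h‖ ^ 4) * s ^ 4 by
    linarith [eq_zero_of_forall_quartic_nonneg this]
  intro s
  set z := x + s • h
  have hz2 : ‖z‖ ^ 2 = 1 + s ^ 2 * ‖h‖ ^ 2 := by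
    rw [norm_add_sq_real, inner_smul_right, hxh, norm_smul, hx, Real.norm_eq_abs, mul_pow, sq_abs]
    ring
  have hz1 : 1 ≤ ‖z‖ := by nlinarith [norm_nonneg z, sq_nonneg (s * ‖h‖)]
  have hmin_z : u₀ ≤ ‖z‖⁻¹ ^ 3 * cubicForm mul z := by
    rw [← cubicForm_smul]
    exact hmin ⟨W.smul_mem _ (W.add_mem hxW (W.smul_mem s hhW)),
      by simp [norm_smul, (zero_lt_one.trans_le hz1).ne']⟩
  have h3 : u₀ * ‖z‖ ^ 3 ≤ cubicForm mul z := by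
    rwa [inv_pow, inv_mul_eq_div, le_div_iff₀ (by positivity)] at hmin_z
  -- `u₀ ≤ 0` and `‖z‖ ≥ 1` replace the non-polynomial `‖z‖ ^ 3` by `‖z‖ ^ 4`
  have h4 : u₀ * ‖z‖ ^ 4 ≤ u₀ * ‖z‖ ^ 3 :=
    mul_le_mul_of_nonpos_left (pow_le_pow_right₀ hz1 (by norm_num)) hneg
  have hz4 : ‖z‖ ^ 4 = (1 + s ^ 2 * ‖h‖ ^ 2) ^ 2 := by rw [← hz2]; ring
  rw [cubicForm_add_smul hcomm hinv] at h3
  rw [hz4] at h4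
  linear_combination h3 + h4

theorem mul_self_eq_of_isMinOn_orthogonal (hcomm : ∀ x y, mul x y = mul y x)
    (hinv : ∀ x y z, ⟪mul x y, z⟫ = ⟪x, mul y z⟫) {A : Submodule ℝ E}
    (hmulA : ∀ x ∈ A, ∀ y ∈ A, mul x y ∈ A) {c x : E} (hcA : c ∈ A) (hc0 : c ≠ 0)
    (hcx : mul c x = x) (hxW : x ∈ (ℝ ∙ c)ᗮ ⊓ A) (hx : ‖x‖ = 1)
    (hmin : IsMinOn (cubicForm mul) (((ℝ ∙ c)ᗮ ⊓ A : Submodule ℝ E) ∩ Metric.sphere 0 1) x)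
    (hneg : cubicForm mul x ≤ 0) :
    mul x x = cubicForm mul x • x + (‖c‖ ^ 2)⁻¹ • c := by
  obtain ⟨hxc, hxA⟩ := Submodule.mem_inf.mp hxW
  have hcx_orth : ⟪c, x⟫ = 0 := Submodule.mem_orthogonal_singleton_iff_inner_right.mp hxc
  have hxc_orth : ⟪x, c⟫ = 0 := by rwa [real_inner_comm]
  set v := mul x x - cubicForm mul x • x - (‖c‖ ^ 2)⁻¹ • c
  have hcv : ⟪c, v⟫ = 0 := by
    have : ⟪c, mul x x⟫ = 1 := by rw [← hinv, hcx, real_inner_self_eq_norm_sq, hx, one_pow]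
    simp only [v, inner_sub_right, inner_smul_right, this, hcx_orth, real_inner_self_eq_norm_sq]
    field_simp
    ring
  have hxv : ⟪x, v⟫ = 0 := by
    simp only [v, inner_sub_right, inner_smul_right, real_inner_self_eq_norm_sq, hx,
      hxc_orth, cubicForm, real_inner_comm x (mul x x)]
    ring
  have hvW : v ∈ (ℝ ∙ c)ᗮ ⊓ A := Submodule.mem_inf.mpr
    ⟨Submodule.mem_orthogonal_singleton_iff_inner_right.mpr hcv,
      A.sub_mem (A.sub_mem (hmulA _ hxA _ hxA) (A.smul_mem _ hxA)) (A.smul_mem _ hcA)⟩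
  have hx2v : ⟪mul x x, v⟫ = 0 :=
    inner_mul_self_eq_zero_of_isMinOn hcomm hinv hxW hx hmin hneg hvW hxv
  have hvv : ⟪v, v⟫ = 0 := by
    calc ⟪v, v⟫ = ⟪mul x x - cubicForm mul x • x - (‖c‖ ^ 2)⁻¹ • c, v⟫ := rfl
      _ = 0 := by simp only [inner_sub_left, inner_smul_left, hx2v, hxv, hcv]; simp
  exact sub_eq_zero.mp ((sub_sub _ _ _).symm.trans (inner_self_eq_zero.mp hvv))

theorem exists_idempotent_ne_of_finrank_eigenspace_ne_one [FiniteDimensional ℝ E]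
    (hcomm : ∀ x y, mul x y = mul y x) (hinv : ∀ x y z, ⟪mul x y, z⟫ = ⟪x, mul y z⟫) {c : E}
    (hc : mul c c = c) (hc0 : c ≠ 0)
    (hsub : ∀ x y, mul c x = x → mul c y = y → mul c (mul x y) = mul x y)
    (hA : finrank ℝ (End.eigenspace (mul c) 1) ≠ 1) :
    ∃ e, mul e e = e ∧ mul c e = e ∧ e ≠ 0 ∧ e ≠ c := by
  set A := End.eigenspace (mul c) 1
  have memA : ∀ {x}, x ∈ A ↔ mul c x = x := by simp [A]
  have hcA : c ∈ A := memA.mpr hc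
  have hW : (ℝ ∙ c)ᗮ ⊓ A ≠ ⊥ := by
    intro hbot
    have := Submodule.finrank_add_inf_finrank_orthogonal
      ((Submodule.span_singleton_le_iff_mem c A).mpr hcA)
    rw [hbot, finrank_bot, finrank_span_singleton hc0] at this
    exact hA this.symm
  obtain ⟨x, hxW, hx, hmin, hneg⟩ := exists_isMinOn_cubicForm (mul := mul) hW
  have hcx : mul c x = x := memA.mp hxW.2
  have hxc : ⟪x, c⟫ = 0 := Submodule.mem_orthogonal_singleton_iff_inner_left.mp hxW.1
  have hsq := mul_self_eq_of_isMinOn_orthogonal hcomm hinv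
    (fun x hx y hy => memA.mpr (hsub x y (memA.mp hx) (memA.mp hy))) hcA hc0 hcx hxW hx hmin hneg
  set l := cubicForm mul x
  set m := (‖c‖ ^ 2)⁻¹
  have hdisc : 0 < l ^ 2 + 4 * m := by positivity
  set α := (√(l ^ 2 + 4 * m))⁻¹
  have hα : α ^ 2 * (l ^ 2 + 4 * m) = 1 := by
    rw [inv_pow, Real.sq_sqrt hdisc.le, inv_mul_cancel₀ hdisc.ne']
  have hα0 : α ≠ 0 := by positivity
  have hxe : ⟪x, α • x + ((1 - α * l) / 2) • c⟫ = α := by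
    simp [inner_add_right, inner_smul_right, hxc, hx]
  refine ⟨α • x + ((1 - α * l) / 2) • c, mul_self_eq_of_quadratic hcomm hc hcx hsq hα (by ring),
    ?_, ?_, ?_⟩
  · simp [map_add, map_smul, hc, hcx]
  · intro h0; rw [h0, inner_zero_right] at hxe; exact hα0 hxe.symm
  · intro hec; rw [hec, hxc] at hxe; exact hα0 hxe.symm

end InnerProduct

@[reducible] def innerCoreOfPosDef {V : Type*} [AddCommGroup V] [Module ℝ V]
    (B : V →ₗ[ℝ] V →ₗ[ℝ] ℝ) (hsymm : ∀ x y, B x y = B y x) (hpos : ∀ x, x ≠ 0 → 0 < B x x) :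
    InnerProductSpace.Core ℝ V where
  inner x y := B x y
  conj_inner_symm x y := hsymm y x
  re_inner_nonneg x := by
    rcases eq_or_ne x 0 with rfl | hx
    · simp
    · simpa using (hpos x hx).le
  add_left x y z := by simp
  smul_left x y r := by simp
  definite x h := by contrapose! h; exact (hpos x h).ne'

/-- for a nonzero idempotent `c` whose Peirce eigenspace `V_c(1)` is a
subalgebra, `dim V_c(1) = 1` iff `c` is indecomposable (not a sum of two nonzero
idempotents with zero product). -/
theorem stmt_12 {V : Type*} [AddCommGroup V] [Module ℝ V] [FiniteDimensional ℝ V]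
    (mul : V →ₗ[ℝ] V →ₗ[ℝ] V) (hcomm : ∀ x y, mul x y = mul y x)
    (B : V →ₗ[ℝ] V →ₗ[ℝ] ℝ) (hsymm : ∀ x y, B x y = B y x)
    (hassoc : ∀ x y z, B (mul x y) z = B x (mul y z))
    (hpos : ∀ x, x ≠ 0 → 0 < B x x)
    (c : V) (hc : mul c c = c) (hc0 : c ≠ 0)
    (hsub : ∀ x y, mul c x = x → mul c y = y → mul c (mul x y) = mul x y) :
    Module.finrank ℝ (Module.End.eigenspace (mul c) 1) = 1 ↔
      ¬ ∃ c₁ c₂ : V, mul c₁ c₁ = c₁ ∧ mul c₂ c₂ = c₂ ∧ c₁ ≠ 0 ∧ c₂ ≠ 0 ∧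
        mul c₁ c₂ = 0 ∧ c = c₁ + c₂ := by
  constructor
  · rintro hA ⟨c₁, c₂, h₁, h₂, hc₁, hc₂, h₁₂, rfl⟩
    exact finrank_eigenspace_add_ne_one hcomm h₁ h₂ hc₁ hc₂ h₁₂ hA
  · intro hindec
    by_contra hA
    let core := innerCoreOfPosDef B hsymm hpos
    let : NormedAddCommGroup V := core.toNormedAddCommGroup
    let : InnerProductSpace ℝ V := .ofCore core.toCore
    obtain ⟨e, he, hce, he0, hec⟩ :=
      exists_idempotent_ne_of_finrank_eigenspace_ne_one hcomm hassoc hc hc0 hsub hA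
    exact hindec ⟨e, c - e, he, mul_self_sub_eq_of_mul_eq hcomm hc hce he, he0,
      sub_ne_zero.mpr hec.symm, mul_sub_eq_zero_of_mul_eq hcomm hce he, (add_sub_cancel e c).symm⟩
end

section
/- Let V be a nonzero finite-dimensional commutative real algebra with positive definite associative symmetric bilinear form, and suppose V has a unit element e and dim V ≥ 2. Then V has at least three distinct nonzero idempotents. -/
/-!
Maximise the cubic form `x ↦ ⟪x², x⟫` on the unit sphere of `e^⊥`. At a maximiser `w` the
Lagrange condition says that `w²` is orthogonal to `e^⊥ ∩ w^⊥`; since `⟪w², e⟫ = ⟪w, w⟫ = 1`,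
this gives `w² = μ w + ‖e‖⁻² e`. The constant term being positive, `X² - μ X - ‖e‖⁻²` has two
distinct real roots `r, r'`, so `span {e, w} ≅ ℝ[X] ⧸ ((X - r)(X - r')) ≅ ℝ × ℝ` contains the
idempotent `c = (w - r' e) / (r - r')`, which is neither `0` nor `e`. Then `c`, `e - c` and `e`
are three distinct nonzero idempotents.
-/

open scoped RealInnerProductSpace

theorem exists_norm_eq_one_fderiv_eq_smul_innerSL {E : Type*} [NormedAddCommGroup E]
    [InnerProductSpace ℝ E] [FiniteDimensional ℝ E] [Nontrivial E] {f : E → ℝ}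
    {f' : E → StrongDual ℝ E} (hf : ∀ x, HasStrictFDerivAt f (f' x) x) :
    ∃ w, ‖w‖ = 1 ∧ ∃ μ : ℝ, f' w = μ • innerSL ℝ w := by
  obtain ⟨w, hw, hmax⟩ := (isCompact_sphere (0 : E) 1).exists_isMaxOn
    (NormedSpace.sphere_nonempty.2 zero_le_one)
    (continuous_iff_continuousAt.2 fun x => (hf x).continuousAt).continuousOn
  have hw1 : ‖w‖ = 1 := by simpa using hw
  have hsphere : {x : E | ‖x‖ ^ 2 = ‖w‖ ^ 2} = Metric.sphere 0 1 := by
    ext x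
    simp only [Set.mem_ofPred_eq, mem_sphere_zero_iff_norm, hw1, one_pow,
      pow_eq_one_iff_of_nonneg (norm_nonneg x) two_ne_zero]
  obtain ⟨a, b, hab, hlagr⟩ := IsLocalExtrOn.exists_multipliers_of_hasStrictFDerivAt_1d
    (hsphere ▸ Or.inr hmax.localize) (hasStrictFDerivAt_norm_sq w) (hf w)
  have hb : b ≠ 0 := by
    rintro rfl
    have : a * (2 * ‖w‖ ^ 2) = 0 := by simpa using congr($hlagr w)
    simp_all
  refine ⟨w, hw1, -(2 * a / b), ?_⟩
  ext h
  have hval : a * (2 * ⟪w, h⟫) + b * f' w h = 0 := by simpa using congr($hlagr h)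
  simp only [neg_smul, neg_apply, smul_apply, coe_innerSL_apply, smul_eq_mul]
  field_simp
  linarith

theorem eq_of_inner_eq_of_forall_mem_orthogonal {E : Type*} [NormedAddCommGroup E]
    [InnerProductSpace ℝ E] {e x y : E} (he : ⟪x, e⟫ = ⟪y, e⟫)
    (h : ∀ v ∈ (ℝ ∙ e)ᗮ, ⟪x, v⟫ = ⟪y, v⟫) : x = y := by
  have hmem : x - y ∈ (ℝ ∙ e)ᗮ := by
    rw [Submodule.mem_orthogonal_singleton_iff_inner_right, real_inner_comm, inner_sub_left, he,
      sub_self]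
  rw [← sub_eq_zero, ← inner_self_eq_zero (𝕜 := ℝ), inner_sub_left, h _ hmem, sub_self]

section UnitalAlgebra

variable {R V : Type*} [AddCommGroup V]

theorem exists_three_idempotents_of_nontrivial_idempotent [CommSemiring R] [Module R V]
    (mul : V →ₗ[R] V →ₗ[R] V) (hcomm : ∀ x y, mul x y = mul y x) {e : V} (he : ∀ x, mul e x = x)
    {c : V} (hc : mul c c = c) (hc0 : c ≠ 0) (hce : c ≠ e) :
    ∃ c₁ c₂ c₃ : V, mul c₁ c₁ = c₁ ∧ mul c₂ c₂ = c₂ ∧ mul c₃ c₃ = c₃ ∧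
      c₁ ≠ 0 ∧ c₂ ≠ 0 ∧ c₃ ≠ 0 ∧ c₁ ≠ c₂ ∧ c₁ ≠ c₃ ∧ c₂ ≠ c₃ := by
  have hce' : mul c e = c := (hcomm c e).trans (he c)
  have he0 : e ≠ 0 := by
    rintro rfl
    exact hc0 (by simpa using (he c).symm)
  refine ⟨c, e - c, e, hc, ?_, he e, hc0, sub_ne_zero.2 hce.symm, he0, ?_, hce, ?_⟩
  · simp [he, hce', hc]
  · intro h
    refine hc0 ((add_eq_right (b := c)).mp ?_)
    calc c + c = mul (c + c) c := by simp [hc]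
      _ = c := by rw [eq_sub_iff_add_eq.mp h, he]
  · simpa using hc0

theorem mul_self_sub_smul_unit_eq_smul [CommRing R] [Module R V] (mul : V →ₗ[R] V →ₗ[R] V)
    (hcomm : ∀ x y, mul x y = mul y x) {e : V} (he : ∀ x, mul e x = x) {w : V} {r r' : R}
    (hw : mul w w = (r + r') • w - (r * r') • e) :
    mul (w - r' • e) (w - r' • e) = (r - r') • (w - r' • e) := by
  simp only [map_sub, map_smul, LinearMap.sub_apply, LinearMap.smul_apply,
    hw, hcomm w e, he]
  module

theorem inv_smul_mul_self_of_mul_self_eq_smul [Field R] [Module R V] (mul : V →ₗ[R] V →ₗ[R] V)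
    {u : V} {k : R} (hk : k ≠ 0) (hu : mul u u = k • u) : mul (k⁻¹ • u) (k⁻¹ • u) = k⁻¹ • u := by
  simp [hu, smul_smul, hk]

end UnitalAlgebra

section MetrisedAlgebra

variable {V : Type*} [NormedAddCommGroup V] [InnerProductSpace ℝ V] [FiniteDimensional ℝ V]
  (mul : V →ₗ[ℝ] V →ₗ[ℝ] V) (hcomm : ∀ x y, mul x y = mul y x)
  (hassoc : ∀ x y z, ⟪mul x y, z⟫ = ⟪x, mul y z⟫)
include hcomm hassoc

theorem hasStrictFDerivAt_inner_mul_self (x : V) :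
    HasStrictFDerivAt (fun x => ⟪mul x x, x⟫) ((3 : ℝ) • innerSL ℝ (mul x x)) x := by
  let mulL : V →L[ℝ] V →L[ℝ] V :=
    LinearMap.toContinuousLinearMap (LinearMap.toContinuousLinearMap.toLinearMap ∘ₗ mul)
  refine ((mulL.hasStrictFDerivAt.clm_apply (hasStrictFDerivAt_id x)).inner ℝ
    (hasStrictFDerivAt_id x)).congr_fderiv ?_
  have h₁ : ∀ h, ⟪mul h x, x⟫ = ⟪mul x x, h⟫ := fun h => by rw [hassoc, real_inner_comm]
  have h₂ : ∀ h, ⟪mul x h, x⟫ = ⟪mul x x, h⟫ := fun h => by rw [hcomm, h₁]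
  ext h
  simp only [mulL, LinearMap.coe_toContinuousLinearMap', LinearMap.coe_comp, LinearEquiv.coe_coe,
    Function.comp_apply, id_eq, ContinuousLinearMap.comp_id, ContinuousLinearMap.comp_apply,
    ContinuousLinearMap.prod_apply, add_apply, ContinuousLinearMap.flip_apply,
    ContinuousLinearMap.id_apply, fderivInnerCLM_apply, inner_add_left, h₁, h₂, smul_apply,
    coe_innerSL_apply, smul_eq_mul]
  ring

theorem exists_norm_eq_one_inner_mul_self_eq (K : Submodule ℝ V) [Nontrivial K] :
    ∃ w ∈ K, ‖w‖ = 1 ∧ ∃ μ : ℝ, ∀ v ∈ K, ⟪mul w w, v⟫ = μ * ⟪w, v⟫ := by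
  obtain ⟨w, hw, μ, hμ⟩ := exists_norm_eq_one_fderiv_eq_smul_innerSL fun x : K =>
    (hasStrictFDerivAt_inner_mul_self mul hcomm hassoc x).comp x K.subtypeL.hasStrictFDerivAt
  refine ⟨w, w.2, hw, μ / 3, fun v hv => ?_⟩
  have : 3 * ⟪mul w w, v⟫ = μ * ⟪(w : V), v⟫ := by simpa using congr($hμ ⟨v, hv⟩)
  linarith

theorem exists_idempotent_ne_zero_ne_unit {e : V} (he : ∀ x, mul e x = x)
    (hdim : 2 ≤ Module.finrank ℝ V) : ∃ c, mul c c = c ∧ c ≠ 0 ∧ c ≠ e := by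
  have he0 : e ≠ 0 := by
    rintro rfl
    have : Subsingleton V := ⟨fun x y => by rw [← he x, ← he y]; simp⟩
    simp [Module.finrank_zero_of_subsingleton] at hdim
  have : Nontrivial (ℝ ∙ e)ᗮ := by
    apply Module.finrank_pos_iff (R := ℝ).mp
    have := (ℝ ∙ e).finrank_add_finrank_orthogonal
    rw [finrank_span_singleton he0] at this
    omega
  obtain ⟨w, hwK, hw1, μ, hcrit⟩ :=
    exists_norm_eq_one_inner_mul_self_eq mul hcomm hassoc (ℝ ∙ e)ᗮ
  have hwe : ⟪w, e⟫ = 0 := Submodule.mem_orthogonal_singleton_iff_inner_left.mp hwK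
  set ν := ⟪e, e⟫⁻¹
  have hν : 0 < ν := inv_pos.2 (real_inner_self_pos.2 he0)
  have hsq : mul w w = μ • w + ν • e := by
    apply eq_of_inner_eq_of_forall_mem_orthogonal (e := e)
    · calc ⟪mul w w, e⟫ = ⟪w, w⟫ := by rw [hassoc, hcomm w e, he]
        _ = ⟪μ • w + ν • e, e⟫ := by
          simp [inner_add_left, real_inner_smul_left, hwe, ν, hw1, he0]
    · intro v hv
      simp [inner_add_left, inner_smul_left, hcrit v hv,
        Submodule.mem_orthogonal_singleton_iff_inner_right.mp hv]
  set s := √(μ ^ 2 + 4 * ν)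
  have hs : 0 < s := Real.sqrt_pos.2 (by positivity)
  have hs2 : s ^ 2 = μ ^ 2 + 4 * ν := Real.sq_sqrt (by positivity)
  set r := (μ + s) / 2
  set r' := (μ - s) / 2
  have hroots : mul w w = (r + r') • w - (r * r') • e := by
    rw [hsq]
    linear_combination (norm := module) ((-1 / 4 : ℝ) * hs2) • e
  have hk : r - r' ≠ 0 := by simp only [r, r']; linarith
  set c := (r - r')⁻¹ • (w - r' • e)
  have hcw : ⟪c, w⟫ = (r - r')⁻¹ := by
    simp [c, inner_smul_left, inner_sub_left, real_inner_comm w e ▸ hwe, hw1]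
  refine ⟨c, inv_smul_mul_self_of_mul_self_eq_smul mul hk
    (mul_self_sub_smul_unit_eq_smul mul hcomm he hroots), ?_, ?_⟩
  · rintro hc
    rw [hc, inner_zero_left] at hcw
    exact inv_ne_zero hk hcw.symm
  · rintro hc
    rw [hc, real_inner_comm, hwe] at hcw
    exact inv_ne_zero hk hcw.symm

end MetrisedAlgebra

abbrev innerProductCoreOfPosDef {V : Type*} [AddCommGroup V] [Module ℝ V]
    (B : V →ₗ[ℝ] V →ₗ[ℝ] ℝ) (hsymm : ∀ x y, B x y = B y x) (hpos : ∀ x, x ≠ 0 → 0 < B x x) :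
    InnerProductSpace.Core ℝ V where
  inner x y := B x y
  conj_inner_symm x y := by simp [hsymm]
  re_inner_nonneg x := by
    rcases eq_or_ne x 0 with rfl | hx
    · simp
    · exact (hpos x hx).le
  add_left x y z := by simp
  smul_left x y r := by simp
  definite x hx := by
    by_contra h
    exact (hpos x h).ne' hx

/-- a commutative unital real algebra of dimension ≥ 2 with positive
definite associative symmetric bilinear form has at least three distinct nonzero
idempotents. -/
theorem stmt_18 {V : Type*} [AddCommGroup V] [Module ℝ V] [FiniteDimensional ℝ V]
    (mul : V →ₗ[ℝ] V →ₗ[ℝ] V) (hcomm : ∀ x y, mul x y = mul y x)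
    (B : V →ₗ[ℝ] V →ₗ[ℝ] ℝ) (hsymm : ∀ x y, B x y = B y x)
    (hassoc : ∀ x y z, B (mul x y) z = B x (mul y z))
    (hpos : ∀ x, x ≠ 0 → 0 < B x x)
    (e : V) (he : ∀ x, mul e x = x)
    (hdim : 2 ≤ Module.finrank ℝ V) :
    ∃ c₁ c₂ c₃ : V, mul c₁ c₁ = c₁ ∧ mul c₂ c₂ = c₂ ∧ mul c₃ c₃ = c₃ ∧
      c₁ ≠ 0 ∧ c₂ ≠ 0 ∧ c₃ ≠ 0 ∧ c₁ ≠ c₂ ∧ c₁ ≠ c₃ ∧ c₂ ≠ c₃ := by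
  let core := innerProductCoreOfPosDef B hsymm hpos
  let _ : NormedAddCommGroup V := core.toNormedAddCommGroup
  let _ : InnerProductSpace ℝ V := InnerProductSpace.ofCore core.toCore
  obtain ⟨c, hc, hc0, hce⟩ := exists_idempotent_ne_zero_ne_unit mul hcomm hassoc he hdim
  exact exists_three_idempotents_of_nontrivial_idempotent mul hcomm he hc hc0 hce
end
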